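/- arXiv:2112.12279 — 3 statements merged into one kernel-verified Lean document; each statement's English description precedes it below -/
import Mathlib

section
/- For all real x in [-1/2, 1/2], 1 - 4x² ≤ H(1/2 - x), where H is the binary entropy function H(y) = -y·log₂(y) - (1-y)·log₂(1-y). -/
/-!
Work with natural logarithms and put `f p = H p - 4 log 2 · p (1 - p)`. Then
`f'' p = 8 log 2 - 1 / (p (1 - p))`, so `f` is concave on `[0, a]` and convex on `[a, 1/2]`,
where `a (1 - a) = 1 / (8 log 2)` (this needs `log 2 > 1/2`). As `f' (1/2) = 0`, convexity puts
`f` above `f (1/2) = 0` on `[a, 1/2]`; concavity then puts it above the chord from `f 0 = 0` to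
`f a ≥ 0` on `[0, a]`. The symmetry `H (1 - p) = H p` covers `[1/2, 1]`, and for `p = 1/2 - x`
one has `4 p (1 - p) = 1 - 4 x²`.
-/

open Real Set

theorem nonneg_of_concaveOn_of_convexOn {f : ℝ → ℝ} {a b c x : ℝ} (hab : a ≤ b) (hbc : b ≤ c)
    (hconc : ConcaveOn ℝ (Icc a b) f) (hconv : ConvexOn ℝ (Icc b c) f) (hc : HasDerivAt f 0 c)
    (hfa : 0 ≤ f a) (hfc : 0 ≤ f c) (hx : x ∈ Icc a c) : 0 ≤ f x := by
  have le_of_convex (y : ℝ) (hy : y ∈ Icc b c) : f c ≤ f y := by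
    rcases hy.2.eq_or_lt with rfl | hyc
    · rfl
    · have hslope := hconv.slope_le_of_hasDerivAt hy ⟨hbc, le_rfl⟩ hyc hc
      rw [slope_def_field, div_nonpos_iff] at hslope
      rcases hslope with ⟨-, h⟩ | ⟨h, -⟩ <;> linarith
  rcases le_total x b with hxb | hbx
  · calc 0 ≤ min (f a) (f b) := le_min hfa (hfc.trans (le_of_convex b ⟨le_rfl, hbc⟩))
      _ ≤ f x := hconc.min_le_of_mem_Icc ⟨le_rfl, hab⟩ ⟨hab, le_rfl⟩ ⟨hx.1, hxb⟩
  · exact hfc.trans (le_of_convex x ⟨hbx, hx.2⟩)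

namespace Real

noncomputable def binEntropyGap (p : ℝ) : ℝ := binEntropy p - 4 * log 2 * (p * (1 - p))

lemma hasDerivAt_binEntropyGap {p : ℝ} (hp₀ : p ≠ 0) (hp₁ : p ≠ 1) :
    HasDerivAt binEntropyGap (log (1 - p) - log p - 4 * log 2 * (1 - 2 * p)) p := by
  have hquad : HasDerivAt (fun q : ℝ => q * (1 - q)) (1 - 2 * p) p := by
    refine ((hasDerivAt_id' p).mul ((hasDerivAt_id' p).const_sub 1)).congr_deriv ?_
    ring
  exact (hasDerivAt_binEntropy hp₀ hp₁).sub (hquad.const_mul (4 * log 2))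

lemma hasDerivAt2_binEntropyGap {p : ℝ} (hp₀ : p ≠ 0) (hp₁ : p ≠ 1) :
    HasDerivAt (fun q => log (1 - q) - log q - 4 * log 2 * (1 - 2 * q))
      (8 * log 2 - (p * (1 - p))⁻¹) p := by
  have hp₁' : 1 - p ≠ 0 := sub_ne_zero.2 hp₁.symm
  have h := (((hasDerivAt_id' p).const_sub 1).log hp₁').sub (hasDerivAt_log hp₀) |>.sub
    (((hasDerivAt_id' p).const_mul 2).const_sub 1 |>.const_mul (4 * log 2))
  refine h.congr_deriv ?_
  field_simp
  ring

lemma hasDerivAt_binEntropyGap_two_inv : HasDerivAt binEntropyGap 0 2⁻¹ := by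
  convert hasDerivAt_binEntropyGap (p := 2⁻¹) (by norm_num) (by norm_num) using 1
  norm_num

lemma binEntropyGap_two_inv : binEntropyGap 2⁻¹ = 0 := by
  rw [binEntropyGap, binEntropy_two_inv]; ring

lemma continuous_binEntropyGap : Continuous binEntropyGap := by
  unfold binEntropyGap; fun_prop

/-- `a` is the inflection point of `binEntropyGap`, see `hasDerivAt2_binEntropyGap`. -/
lemma exists_mul_one_sub_eq_inv : ∃ a ∈ Icc (0 : ℝ) 2⁻¹, a * (1 - a) = (8 * log 2)⁻¹ := by
  have hlog : 1 / 2 < log 2 := by linarith [log_two_gt_d9]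
  have hmem : (8 * log 2)⁻¹ ∈ Icc ((0 : ℝ) * (1 - 0)) (2⁻¹ * (1 - 2⁻¹)) := by
    constructor
    · norm_num; positivity
    · rw [inv_le_comm₀ (by positivity) (by norm_num)]; norm_num; linarith
  exact intermediate_value_Icc (by norm_num) (by fun_prop) hmem

lemma concaveOn_binEntropyGap {a : ℝ} (ha : a ≤ 2⁻¹) (hinfl : a * (1 - a) = (8 * log 2)⁻¹) :
    ConcaveOn ℝ (Icc 0 a) binEntropyGap := by
  refine concaveOn_of_hasDerivWithinAt2_nonpos (convex_Icc 0 a)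
    (f' := fun q => log (1 - q) - log q - 4 * log 2 * (1 - 2 * q))
    (f'' := fun q => 8 * log 2 - (q * (1 - q))⁻¹)
    continuous_binEntropyGap.continuousOn ?_ ?_ ?_
  all_goals
    intro p hp
    rw [interior_Icc] at hp
    have hp₀ : 0 < p := hp.1
    have hp₁ : p < 1 := by linarith [hp.2]
  · exact (hasDerivAt_binEntropyGap hp₀.ne' hp₁.ne).hasDerivWithinAt
  · exact (hasDerivAt2_binEntropyGap hp₀.ne' hp₁.ne).hasDerivWithinAt
  · have : p * (1 - p) ≤ (8 * log 2)⁻¹ := by rw [← hinfl]; nlinarith [hp.2]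
    rw [sub_nonpos, le_inv_comm₀ (by positivity) (mul_pos hp₀ (by linarith))]
    exact this

lemma convexOn_binEntropyGap {a : ℝ} (ha : 0 ≤ a) (hinfl : a * (1 - a) = (8 * log 2)⁻¹) :
    ConvexOn ℝ (Icc a 2⁻¹) binEntropyGap := by
  refine convexOn_of_hasDerivWithinAt2_nonneg (convex_Icc a 2⁻¹)
    (f' := fun q => log (1 - q) - log q - 4 * log 2 * (1 - 2 * q))
    (f'' := fun q => 8 * log 2 - (q * (1 - q))⁻¹)
    continuous_binEntropyGap.continuousOn ?_ ?_ ?_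
  all_goals
    intro p hp
    rw [interior_Icc] at hp
    have hp₀ : 0 < p := by linarith [hp.1]
    have hp₁ : p < 1 := by linarith [hp.2]
  · exact (hasDerivAt_binEntropyGap hp₀.ne' hp₁.ne).hasDerivWithinAt
  · exact (hasDerivAt2_binEntropyGap hp₀.ne' hp₁.ne).hasDerivWithinAt
  · have : (8 * log 2)⁻¹ ≤ p * (1 - p) := by rw [← hinfl]; nlinarith [hp.1, hp.2]
    rw [sub_nonneg, inv_le_comm₀ (mul_pos hp₀ (by linarith)) (by positivity)]
    exact this

lemma binEntropyGap_nonneg {p : ℝ} (hp₀ : 0 ≤ p) (hp : p ≤ 2⁻¹) : 0 ≤ binEntropyGap p := by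
  obtain ⟨a, ⟨ha₀, ha⟩, hinfl⟩ := exists_mul_one_sub_eq_inv
  refine nonneg_of_concaveOn_of_convexOn ha₀ ha (concaveOn_binEntropyGap ha hinfl)
    (convexOn_binEntropyGap ha₀ hinfl) hasDerivAt_binEntropyGap_two_inv ?_
    binEntropyGap_two_inv.ge ⟨hp₀, hp⟩
  simp [binEntropyGap]

theorem four_mul_log_two_mul_le_binEntropy {p : ℝ} (hp₀ : 0 ≤ p) (hp₁ : p ≤ 1) :
    4 * log 2 * (p * (1 - p)) ≤ binEntropy p := by
  rcases le_total p 2⁻¹ with hp | hp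
  · simpa [binEntropyGap] using binEntropyGap_nonneg hp₀ hp
  · have h := binEntropyGap_nonneg (p := 1 - p) (by linarith) (by linarith)
    rw [binEntropyGap, binEntropy_one_sub] at h
    linarith

lemma binEntropy_div_log (b p : ℝ) :
    binEntropy p / log b = -p * logb b p - (1 - p) * logb b (1 - p) := by
  simp only [binEntropy, logb, log_inv]
  ring

end Real

/-- Entropy bound: for `x ∈ [-1/2, 1/2]`, `1 - 4x² ≤ H(1/2 - x)` where `H` is the
binary entropy function with base-2 logarithms. -/
theorem entropy_bound (x : ℝ) (h1 : -(1/2) ≤ x) (h2 : x ≤ 1/2) :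
    1 - 4 * x ^ 2 ≤
      -(1/2 - x) * Real.logb 2 (1/2 - x) - (1 - (1/2 - x)) * Real.logb 2 (1 - (1/2 - x)) := by
  rw [← binEntropy_div_log, le_div_iff₀ (log_pos one_lt_two)]
  have h := four_mul_log_two_mul_le_binEntropy (p := 1/2 - x) (by linarith) (by linarith)
  linarith
end

section
/- Let k ≥ 16 be a perfect square (so √k is an integer). Then the sum over integers i from k/2 - 2√k to k/2 - √k of C(k,i) is at least (√k/9)·C(k, k/2 - √k). -/
/-!
Write `k = r²` and `c = k/2 - r`. Since `C(k, i) / C(k, i + 1) = (i + 1) / (k - i)`, every step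
down from `c` to `c - r` shrinks the binomial coefficient by a factor at least
`q = (r - 4) / (r + 4)`, so the sum dominates `C(k, c) · (1 + q + ⋯ + qʳ)`. As `1 - q = 8 / (r + 4)`
and Bernoulli's inequality gives `q ^ (r + 1) ≤ 1/9`, this geometric sum is at least `(r + 4)/9`.
-/

open Finset

theorem mul_choose_succ_le_choose {q : ℝ} {k i : ℕ} (h : q * ((k : ℝ) - i) ≤ i + 1) :
    q * k.choose (i + 1) ≤ k.choose i := by
  rcases lt_or_ge i k with hik | hki
  · have hrec : (k.choose (i + 1) : ℝ) * (i + 1) = k.choose i * ((k : ℝ) - i) := by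
      rw [← Nat.cast_sub hik.le]
      exact_mod_cast Nat.choose_succ_right_eq k i
    refine le_of_mul_le_mul_right ?_ (by positivity : (0 : ℝ) < i + 1)
    calc q * k.choose (i + 1) * (i + 1) = k.choose i * (q * ((k : ℝ) - i)) := by
          rw [mul_assoc, hrec]; ring
      _ ≤ k.choose i * (i + 1) := by gcongr
  · rw [Nat.choose_eq_zero_of_lt (Nat.lt_succ_of_le hki)]
    simp

theorem sub_four_div_add_four_mul_choose_succ_le {k r i : ℕ} (hk : k = r ^ 2)
    (hi : k ≤ 2 * i + 4 * r) :
    ((r : ℝ) - 4) / (r + 4) * k.choose (i + 1) ≤ k.choose i := by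
  apply mul_choose_succ_le_choose
  have hi' : (r : ℝ) ^ 2 ≤ 2 * i + 4 * r := by exact_mod_cast hk ▸ hi
  rw [div_mul_eq_mul_div, div_le_iff₀ (by positivity), hk, Nat.cast_pow]
  nlinarith [mul_le_mul_of_nonneg_left hi' (Nat.cast_nonneg (α := ℝ) r)]

theorem sum_Icc_sub_eq_sum_range {M : Type*} [AddCommMonoid M] (f : ℕ → M) {c r : ℕ}
    (h : r ≤ c) : ∑ i ∈ Icc (c - r) c, f i = ∑ j ∈ range (r + 1), f (c - j) := by
  rw [← Ico_add_one_right_eq_Icc, sum_Ico_eq_sum_range, ← sum_range_reflect]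
  refine sum_congr (by congr 1; omega) fun j hj => ?_
  rw [mem_range] at hj
  congr 1
  omega

section GeometricDecay

variable {R : Type*} [CommSemiring R] [PartialOrder R] [IsOrderedRing R]
  {g : ℕ → R} {q : R} {r : ℕ}

theorem pow_mul_le_of_mul_le_succ (hq : 0 ≤ q) (hg : ∀ j < r, q * g j ≤ g (j + 1)) :
    ∀ j ≤ r, q ^ j * g 0 ≤ g j
  | 0, _ => by simp
  | j + 1, hj =>
    calc q ^ (j + 1) * g 0 = q * (q ^ j * g 0) := by ring
      _ ≤ q * g j := by gcongr; exact pow_mul_le_of_mul_le_succ hq hg j (by omega)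
      _ ≤ g (j + 1) := hg j hj

theorem geom_sum_mul_le_sum_of_mul_le_succ (hq : 0 ≤ q) (hg : ∀ j < r, q * g j ≤ g (j + 1)) :
    (∑ j ∈ range (r + 1), q ^ j) * g 0 ≤ ∑ j ∈ range (r + 1), g j := by
  rw [sum_mul]
  exact sum_le_sum fun j hj =>
    pow_mul_le_of_mul_le_succ hq hg j (Nat.lt_succ_iff.1 (mem_range.1 hj))

end GeometricDecay

theorem nine_mul_pow_le_pow {r : ℕ} (hr : 4 ≤ r) :
    9 * ((r : ℝ) - 4) ^ (r + 1) ≤ ((r : ℝ) + 4) ^ (r + 1) := by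
  have ha : (0 : ℝ) ≤ r - 4 := sub_nonneg.2 (by exact_mod_cast hr)
  have hbern := pow_add_mul_le_add_pow ha (by linarith : (0 : ℝ) ≤ 2 * (r - 4) + 8) (r + 1)
  have hpow : ((r : ℝ) - 4) ^ (r + 1) ≤ (r + 1) * ((r : ℝ) - 4) ^ r := by
    rw [pow_succ, mul_comm]
    gcongr
    linarith
  push_cast at hbern
  rw [show (r : ℝ) - 4 + 8 = r + 4 by ring] at hbern
  linarith

theorem div_nine_le_geom_sum {r : ℕ} (hr : 4 ≤ r) :
    (r : ℝ) / 9 ≤ ∑ j ∈ range (r + 1), (((r : ℝ) - 4) / (r + 4)) ^ j := by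
  set q : ℝ := (r - 4) / (r + 4)
  have hq : q ^ (r + 1) ≤ 1 / 9 := by
    rw [div_pow, div_le_div_iff₀ (by positivity) (by norm_num)]
    linarith [nine_mul_pow_le_pow hr]
  have hgap : 1 - q = 8 / (r + 4) := by simp only [q]; field_simp; ring
  have hgeom := geom_sum_mul q (r + 1)
  calc (r : ℝ) / 9 ≤ (r + 4) / 8 * (8 / 9) := by linarith
    _ ≤ (r + 4) / 8 * (1 - q ^ (r + 1)) := by gcongr; linarith
    _ = (r + 4) / 8 * (1 - q) * ∑ j ∈ range (r + 1), q ^ j := by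
        rw [← neg_sub, ← hgeom]; ring
    _ = ∑ j ∈ range (r + 1), q ^ j := by rw [hgap]; field_simp

/-- For an even perfect square `k = r² ≥ 16`, the sum of `C(k,i)` for
`i` from `k/2 - 2√k` to `k/2 - √k` is at least `(√k/9)·C(k, k/2 - √k)`. -/
theorem binom_sum_ge (k r : ℕ) (hk : 16 ≤ k) (hr : k = r ^ 2) (he : Even k) :
    ((r : ℝ) / 9) * (k.choose (k / 2 - r) : ℝ)
      ≤ ∑ i ∈ Finset.Icc (k / 2 - 2 * r) (k / 2 - r), (k.choose i : ℝ) := by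
  have h2n : 2 * (k / 2) = r ^ 2 := hr ▸ Nat.two_mul_div_two_of_even he
  have hr4 : 4 ≤ r := by nlinarith
  have hrn : 2 * r ≤ k / 2 := by nlinarith
  set c := k / 2 - r
  have hstep : ∀ j < r, ((r : ℝ) - 4) / (r + 4) * k.choose (c - j) ≤ k.choose (c - (j + 1)) := by
    intro j hj
    rw [show c - j = c - (j + 1) + 1 by omega]
    exact sub_four_div_add_four_mul_choose_succ_le hr (by omega)
  calc (r : ℝ) / 9 * k.choose c
      ≤ (∑ j ∈ range (r + 1), (((r : ℝ) - 4) / (r + 4)) ^ j) * k.choose (c - 0) :=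
        mul_le_mul_of_nonneg_right (div_nine_le_geom_sum hr4) (by positivity)
    _ ≤ ∑ j ∈ range (r + 1), (k.choose (c - j) : ℝ) :=
        geom_sum_mul_le_sum_of_mul_le_succ (div_nonneg (by simpa using hr4) (by positivity)) hstep
    _ = ∑ i ∈ Icc (k / 2 - 2 * r) c, (k.choose i : ℝ) := by
        rw [show k / 2 - 2 * r = c - r by omega, sum_Icc_sub_eq_sum_range _ (by omega)]
end

section
/- Let k be a positive integer, ε̃ ∈ (0, 1/√k], p = 1/(e^ε̃+1), g(i) = p^k·e^{ε̃(k-i)}, p_avg = g(kp), and U = (k/ε̃)·ln(2e^ε̃/(e^ε̃+1)). Then for every real i with U - 2√k ≤ i ≤ U - √k/2: (g(i) - 2^{-k})·(k - 2i)/k ≥ (ε̃/2)·2^{-k}. -/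
/-!
Writing `T = 2^{-k}`, the identity `p^k e^{ε̃k} = T e^{ε̃U}` gives `g(i) = T e^{ε̃(U - i)}`,
so `g(i) - T ≥ T ε̃ (U - i) ≥ T ε̃ √k / 2` for `i ≤ U - √k/2`. By AM–GM, `(e^ε̃ + 1)/2 ≥ e^{ε̃/2}`,
hence `U ≤ k/2` and `(k - 2i)/k ≥ √k/k = 1/√k`; the product of the two bounds is `(ε̃/2) T`.
-/

open Real

lemma log_two_mul_exp_div_exp_add_one_le (ε : ℝ) :
    log (2 * exp ε / (exp ε + 1)) ≤ ε / 2 := by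
  rw [log_le_iff_le_exp (by positivity), div_le_iff₀ (by positivity)]
  have hsq : exp ε = exp (ε / 2) ^ 2 := by rw [← exp_nat_mul]; ring_nf
  rw [hsq]
  nlinarith [mul_nonneg (exp_pos (ε / 2)).le (sq_nonneg (exp (ε / 2) - 1))]

lemma div_mul_log_two_mul_exp_div_exp_add_one_le {ε : ℝ} (hε : 0 < ε) (k : ℕ) :
    k / ε * log (2 * exp ε / (exp ε + 1)) ≤ k / 2 :=
  calc k / ε * log (2 * exp ε / (exp ε + 1))
      ≤ k / ε * (ε / 2) := by gcongr; exact log_two_mul_exp_div_exp_add_one_le ε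
    _ = k / 2 := by field_simp

lemma one_div_exp_add_one_pow_mul_exp {ε : ℝ} (hε : ε ≠ 0) (k : ℕ) (i : ℝ) :
    (1 / (exp ε + 1)) ^ k * exp (ε * (k - i))
      = (2 : ℝ) ^ (-(k : ℤ)) * exp (ε * (k / ε * log (2 * exp ε / (exp ε + 1)) - i)) := by
  have hlog : ε * (k / ε * log (2 * exp ε / (exp ε + 1)) - i)
      = k * log (2 * exp ε / (exp ε + 1)) + -(ε * i) := by field_simp; ring
  have hlin : ε * (k - i) = k * ε + -(ε * i) := by ring
  rw [hlog, hlin, exp_add, exp_add, exp_nat_mul, exp_nat_mul, exp_log (by positivity),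
    zpow_neg, zpow_natCast, ← mul_assoc, ← mul_assoc, ← mul_pow, ← inv_pow, ← mul_pow]
  congr 2
  field_simp

theorem summand_lower_bound_general (k : ℕ) (hk : 0 < k) (ε : ℝ) (hε0 : 0 < ε)
    (p : ℝ) (hp : p = 1 / (Real.exp ε + 1))
    (g : ℝ → ℝ) (hg : ∀ i : ℝ, g i = p ^ k * Real.exp (ε * ((k : ℝ) - i)))
    (U : ℝ) (hU : U = ((k : ℝ) / ε) * Real.log (2 * Real.exp ε / (Real.exp ε + 1)))
    (i : ℝ) (hi2 : i ≤ U - Real.sqrt k / 2) :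
    (ε / 2) * (2 : ℝ) ^ (-(k : ℤ))
      ≤ (g i - (2 : ℝ) ^ (-(k : ℤ))) * (((k : ℝ) - 2 * i) / (k : ℝ)) := by
  have hUk : U ≤ k / 2 := hU ▸ div_mul_log_two_mul_exp_div_exp_add_one_le hε0 k
  have hgi : g i = (2 : ℝ) ^ (-(k : ℤ)) * exp (ε * (U - i)) := by
    rw [hg, hp, hU, one_div_exp_add_one_pow_mul_exp hε0.ne']
  set T := (2 : ℝ) ^ (-(k : ℤ))
  have hkpos : (0 : ℝ) < k := by exact_mod_cast hk
  have hs : 0 < √(k : ℝ) := sqrt_pos.mpr hkpos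
  have hgap : T * (ε * √k / 2) ≤ g i - T := by
    have hexp : ε * (√k / 2) ≤ exp (ε * (U - i)) - 1 := by
      linarith [add_one_le_exp (ε * (U - i)), mul_le_mul_of_nonneg_left
        (show √k / 2 ≤ U - i by linarith) hε0.le]
    rw [hgi]
    nlinarith [mul_le_mul_of_nonneg_left hexp (show 0 ≤ T by positivity)]
  have hfrac : 1 / √k ≤ (k - 2 * i) / k := by
    rw [div_le_div_iff₀ hs hkpos]
    nlinarith [mul_self_sqrt hkpos.le]
  calc ε / 2 * T = T * (ε * √k / 2) * (1 / √k) := by field_simp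
    _ ≤ (g i - T) * ((k - 2 * i) / k) :=
      mul_le_mul hgap hfrac (by positivity) (le_trans (by positivity) hgap)

/-- With `ε̃ ∈ (0, 1/√k]`, `p = 1/(e^ε̃+1)`, `g(i) = p^k·e^{ε̃(k-i)}` and
`U = (k/ε̃)·ln(2e^ε̃/(e^ε̃+1))`: for every real `i ∈ [U - 2√k, U - √k/2]`,
`(g(i) - 2^{-k})·(k-2i)/k ≥ (ε̃/2)·2^{-k}`. -/
theorem summand_lower_bound (k : ℕ) (hk : 0 < k) (ε : ℝ) (hε0 : 0 < ε)
    (hε1 : ε ≤ 1 / Real.sqrt k)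
    (p : ℝ) (hp : p = 1 / (Real.exp ε + 1))
    (g : ℝ → ℝ) (hg : ∀ i : ℝ, g i = p ^ k * Real.exp (ε * ((k : ℝ) - i)))
    (pavg : ℝ) (hpavg : pavg = g ((k : ℝ) * p))
    (U : ℝ) (hU : U = ((k : ℝ) / ε) * Real.log (2 * Real.exp ε / (Real.exp ε + 1)))
    (i : ℝ) (hi1 : U - 2 * Real.sqrt k ≤ i) (hi2 : i ≤ U - Real.sqrt k / 2) :
    (ε / 2) * (2 : ℝ) ^ (-(k : ℤ))
      ≤ (g i - (2 : ℝ) ^ (-(k : ℤ))) * (((k : ℝ) - 2 * i) / (k : ℝ)) :=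
  summand_lower_bound_general k hk ε hε0 p hp g hg U hU i hi2
end
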